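/- arXiv:1210.8122 — 6 statements merged into one kernel-verified Lean document; each statement's English description precedes it below -/
import Mathlib

section
/- For all k in [0,1], ∫₀^{π/2} (2sin²θ - 1)/√(1-k²sin²θ) dθ ≥ 0. -/
open Real Set

noncomputable def ellK (k : ℝ) : ℝ :=
  ∫ θ in (0:ℝ)..(Real.pi/2), 1 / Real.sqrt (1 - k^2 * Real.sin θ ^ 2)

noncomputable def ellE (k : ℝ) : ℝ :=
  ∫ θ in (0:ℝ)..(Real.pi/2), Real.sqrt (1 - k^2 * Real.sin θ ^ 2)

lemma key_ineq (k s : ℝ) (hk0 : 0 ≤ k) (hk1 : k < 1) (hs0 : 0 ≤ s) (hs1 : s ≤ 1) :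
    0 ≤ (2*s - 1) / Real.sqrt (1 - k^2*s) + (2*(1-s) - 1) / Real.sqrt (1 - k^2*(1-s)) := by
  have hk2 : k^2 < 1 := by nlinarith
  have hA2 : 0 < 1 - k^2*s := by nlinarith [sq_nonneg k]
  have hB2 : 0 < 1 - k^2*(1-s) := by nlinarith [sq_nonneg k]
  set A := Real.sqrt (1 - k^2*s) with hA
  set B := Real.sqrt (1 - k^2*(1-s)) with hB
  have hApos : 0 < A := Real.sqrt_pos.mpr hA2
  have hBpos : 0 < B := Real.sqrt_pos.mpr hB2
  have hAsq : A^2 = 1 - k^2*s := Real.sq_sqrt hA2.le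
  have hBsq : B^2 = 1 - k^2*(1-s) := Real.sq_sqrt hB2.le
  rw [div_add_div _ _ hApos.ne' hBpos.ne']
  apply div_nonneg _ (by positivity)
  have hkey : ((2*s-1)*B + (2*(1-s)-1)*A) * (A+B) = k^2*(2*s-1)^2 := by
    have h1 : ((2*s-1)*B + (2*(1-s)-1)*A) * (A+B) = (2*s-1)*(B^2 - A^2) := by ring
    rw [h1, hAsq, hBsq]; ring
  nlinarith [sq_nonneg (k*(2*s-1)), mul_pos hApos hBpos]

theorem stmt1 : ∀ k ∈ Icc (0:ℝ) 1,
    (∫ θ in (0:ℝ)..(Real.pi/2),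
      (2 * Real.sin θ ^ 2 - 1) / Real.sqrt (1 - k^2 * Real.sin θ ^ 2)) ≥ 0 := by
  rintro k ⟨hk0, hk1⟩
  rcases hk1.lt_or_eq with hk1 | rfl
  · -- case k < 1
    have hk2 : k^2 < 1 := by nlinarith
    set f : ℝ → ℝ := fun θ => (2 * Real.sin θ ^ 2 - 1) / Real.sqrt (1 - k^2 * Real.sin θ ^ 2)
      with hf
    have hpos : ∀ x : ℝ, 0 < 1 - k^2 * Real.sin x ^ 2 := by
      intro x
      nlinarith [Real.sin_sq_le_one x, sq_nonneg k, sq_nonneg (Real.sin x)]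
    have hc : Continuous f := by
      apply Continuous.div (by continuity) (by continuity)
      intro x
      exact (Real.sqrt_pos.mpr (hpos x)).ne'
    have hint : IntervalIntegrable f MeasureTheory.volume 0 (π/2) :=
      hc.intervalIntegrable _ _
    have hc2 : Continuous (fun θ => f (π/2 - θ)) :=
      hc.comp (continuous_const.sub continuous_id)
    have hint2 : IntervalIntegrable (fun θ => f (π/2 - θ)) MeasureTheory.volume 0 (π/2) :=
      hc2.intervalIntegrable _ _
    have hsub : (∫ θ in (0:ℝ)..(π/2), f (π/2 - θ)) = ∫ θ in (0:ℝ)..(π/2), f θ := by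
      rw [intervalIntegral.integral_comp_sub_left f (π/2)]
      norm_num
    have h2 : 0 ≤ ∫ θ in (0:ℝ)..(π/2), (f θ + f (π/2 - θ)) := by
      apply intervalIntegral.integral_nonneg (by positivity)
      intro x _
      have hsin : Real.sin (π/2 - x) = Real.cos x := Real.sin_pi_div_two_sub x
      have hcos : Real.cos x ^ 2 = 1 - Real.sin x ^ 2 := Real.cos_sq' x
      have h0 : 0 ≤ Real.sin x ^ 2 := sq_nonneg _
      have h1 : Real.sin x ^ 2 ≤ 1 := Real.sin_sq_le_one x
      have := key_ineq k (Real.sin x ^ 2) hk0 hk1 h0 h1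
      simp only [hf, hsin, hcos]
      convert this using 3 <;> ring
    have hadd : (∫ θ in (0:ℝ)..(π/2), (f θ + f (π/2 - θ)))
        = (∫ θ in (0:ℝ)..(π/2), f θ) + ∫ θ in (0:ℝ)..(π/2), f (π/2 - θ) :=
      intervalIntegral.integral_add hint hint2
    rw [hadd, hsub] at h2
    linarith
  · -- case k = 1 : the integrand is not integrable, so the integral is 0
    have hnot : ¬ IntervalIntegrable
        (fun θ => (2 * Real.sin θ ^ 2 - 1) / Real.sqrt (1 - 1^2 * Real.sin θ ^ 2))
        MeasureTheory.volume 0 (π/2) := by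
      apply not_intervalIntegrable_of_sub_inv_isBigO_punctured (c := π/2)
      · rw [Asymptotics.isBigO_iff]
        refine ⟨2, ?_⟩
        have hev : ∀ᶠ x in nhds (π/2), |x - π/2| < π/6 :=
          eventually_abs_sub_lt _ (by positivity)
        filter_upwards [hev.filter_mono nhdsWithin_le_nhds, self_mem_nhdsWithin]
          with x hx hxne
        have hxne' : x ≠ π/2 := hxne
        -- rewrite sqrt(1 - sin² x) = |cos x|
        have hcos2 : (1:ℝ) - 1^2 * Real.sin x ^ 2 = Real.cos x ^ 2 := by
          have := Real.cos_sq' x; nlinarith [this]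
        have hsqrt : Real.sqrt (1 - 1^2 * Real.sin x ^ 2) = |Real.cos x| := by
          rw [hcos2, Real.sqrt_sq_eq_abs]
        -- cos x ≠ 0
        have hcosne : Real.cos x ≠ 0 := by
          intro h
          rcases Real.cos_eq_zero_iff.mp h with ⟨n, hn⟩
          have hpi : 0 < π := Real.pi_pos
          have : |((2*(n:ℝ)+1) * π / 2) - π/2| = |(n:ℝ)| * π := by
            rw [show ((2*(n:ℝ)+1) * π / 2) - π/2 = (n:ℝ) * π by ring, abs_mul,
              abs_of_pos hpi]
          rw [hn, this] at hx
          have hn0 : (n:ℝ) = 0 := by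
            by_contra hne
            have : (1:ℝ) ≤ |(n:ℝ)| := by
              rcases Int.one_le_abs (by exact_mod_cast fun h0 => hne (by exact_mod_cast h0))
                with h'
              exact_mod_cast h'
            nlinarith [abs_nonneg ((n:ℝ))]
          rw [hn0] at hn
          apply hxne'
          rw [hn]; ring
        -- |cos x| ≤ |x - π/2|
        have hcosle : |Real.cos x| ≤ |x - π/2| := by
          have : Real.cos x = Real.sin (π/2 - x) := (Real.sin_pi_div_two_sub x).symm
          rw [this]
          calc |Real.sin (π/2 - x)| ≤ |π/2 - x| := Real.abs_sin_le_abs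
            _ = |x - π/2| := abs_sub_comm _ _
        -- sin² x ≥ 3/4, so |2 sin² x - 1| ≥ 1/2
        have hsin : Real.sin x ≥ Real.sqrt 3 / 2 := by
          have : Real.sin x = Real.cos (π/2 - x) := (Real.cos_pi_div_two_sub x).symm
          rw [this, ← Real.cos_abs]
          calc Real.sqrt 3 / 2 = Real.cos (π/6) := (Real.cos_pi_div_six).symm
            _ ≤ Real.cos |π/2 - x| := by
                apply Real.cos_le_cos_of_nonneg_of_le_pi (abs_nonneg _)
                · linarith [Real.pi_pos]
                · rw [abs_sub_comm]; exact hx.le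
        have hsin2 : Real.sin x ^ 2 ≥ 3/4 := by
          have h3 : Real.sqrt 3 ^ 2 = 3 := Real.sq_sqrt (by norm_num)
          have hs3 : 0 ≤ Real.sqrt 3 / 2 := by positivity
          nlinarith
        have hnum : |2 * Real.sin x ^ 2 - 1| ≥ 1/2 := by
          rw [abs_of_nonneg (by linarith)]; linarith
        -- combine
        have hxpos : 0 < |x - π/2| := abs_pos.mpr (sub_ne_zero.mpr hxne')
        have hcpos : 0 < |Real.cos x| := abs_pos.mpr hcosne
        rw [Real.norm_eq_abs, Real.norm_eq_abs, abs_inv, abs_div, hsqrt, abs_abs]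
        calc |x - π/2|⁻¹ ≤ |Real.cos x|⁻¹ := by
              apply inv_anti₀ hcpos hcosle
          _ ≤ 2 * (|2 * Real.sin x ^ 2 - 1| / |Real.cos x|) := by
              rw [inv_eq_one_div, mul_div_assoc']
              gcongr
              linarith
      · exact (by positivity : (0:ℝ) < π/2).ne
      · exact Set.right_mem_uIcc
    rw [intervalIntegral.integral_undef hnot]
end

section
/- The function Φ(a) = cos(a)·E(√(1-tan²a)) is non-decreasing on the interval (0, π/4). -/
open Real Set
set_option maxHeartbeats 1000000

lemma sqrtsum {x y : ℝ} (hx0 : 0 ≤ x) (hx1 : x ≤ 1) (hy0 : 0 ≤ y) (hy1 : y ≤ 1)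
    (h : x * (1 - x) ≤ y * (1 - y)) :
    Real.sqrt x + Real.sqrt (1 - x) ≤ Real.sqrt y + Real.sqrt (1 - y) := by
  have key : ∀ z : ℝ, 0 ≤ z → z ≤ 1 →
      (Real.sqrt z + Real.sqrt (1 - z))^2 = 1 + 2 * Real.sqrt (z * (1 - z)) := by
    intro z h0 h1
    rw [add_sq, Real.sq_sqrt h0, Real.sq_sqrt (by linarith), mul_assoc, ← Real.sqrt_mul h0]
    ring
  have h2 : (Real.sqrt x + Real.sqrt (1 - x))^2 ≤ (Real.sqrt y + Real.sqrt (1 - y))^2 := by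
    rw [key x hx0 hx1, key y hy0 hy1]
    have := Real.sqrt_le_sqrt h
    linarith
  calc Real.sqrt x + Real.sqrt (1 - x)
      = Real.sqrt ((Real.sqrt x + Real.sqrt (1 - x))^2) := (Real.sqrt_sq (by positivity)).symm
    _ ≤ Real.sqrt ((Real.sqrt y + Real.sqrt (1 - y))^2) := Real.sqrt_le_sqrt h2
    _ = _ := Real.sqrt_sq (by positivity)

lemma keylem (cc sc ct st : ℝ) (h1 : sc^2 + cc^2 = 1) (h2 : st^2 + ct^2 = 1) :
    (cc^2 * ct^2 + sc^2 * st^2) * (1 - (cc^2 * ct^2 + sc^2 * st^2))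
      = 1/4 - (cc^2 - sc^2)^2 * (1/2 - st^2)^2 := by
  have hct : ct^2 = 1 - st^2 := by linarith
  have hcc : cc^2 = 1 - sc^2 := by linarith
  rw [hct, hcc]; ring

lemma compl (cc sc ct st : ℝ) (h1 : sc^2 + cc^2 = 1) (h2 : st^2 + ct^2 = 1) :
    1 - (cc^2 * ct^2 + sc^2 * st^2) = cc^2 * st^2 + sc^2 * ct^2 := by
  have hct : ct^2 = 1 - st^2 := by linarith
  have hcc : cc^2 = 1 - sc^2 := by linarith
  rw [hct, hcc]; ring

noncomputable def gg (c θ : ℝ) : ℝ :=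
  Real.sqrt (Real.cos c ^ 2 * Real.cos θ ^ 2 + Real.sin c ^ 2 * Real.sin θ ^ 2)

lemma gg_cont (c : ℝ) : Continuous fun θ => gg c θ := by
  unfold gg; fun_prop

lemma reduce {a : ℝ} (ha : a ∈ Ioo 0 (Real.pi/4)) :
    Real.cos a * ellE (Real.sqrt (1 - Real.tan a ^ 2)) = ∫ θ in (0:ℝ)..(Real.pi/2), gg a θ := by
  obtain ⟨h0, h4⟩ := ha
  have hpi : Real.pi / 4 < Real.pi / 2 := by
    have := Real.pi_pos; linarith
  have hcos : 0 < Real.cos a := Real.cos_pos_of_mem_Ioo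
    ⟨by linarith [Real.pi_pos], by linarith⟩
  have htan : Real.tan a < 1 := by
    have := Real.tan_lt_tan_of_nonneg_of_lt_pi_div_two h0.le hpi h4
    rwa [Real.tan_pi_div_four] at this
  have htan0 : 0 ≤ Real.tan a := Real.tan_nonneg_of_nonneg_of_le_pi_div_two h0.le (by linarith)
  have hk : 1 - Real.tan a ^ 2 ≥ 0 := by nlinarith
  unfold ellE
  rw [← intervalIntegral.integral_const_mul]
  apply intervalIntegral.integral_congr
  intro θ _
  simp only
  rw [Real.sq_sqrt hk]
  rw [show Real.cos a = Real.sqrt (Real.cos a ^ 2) from (Real.sqrt_sq hcos.le).symm,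
    ← Real.sqrt_mul (sq_nonneg _)]
  unfold gg
  congr 1
  have htaneq : Real.tan a = Real.sin a / Real.cos a := Real.tan_eq_sin_div_cos a
  rw [htaneq]
  have hca : Real.cos a ≠ 0 := ne_of_gt hcos
  field_simp
  nlinarith [Real.sin_sq_add_cos_sq θ, Real.sin_sq_add_cos_sq a]

lemma pairmono {a b : ℝ} (hcb : 0 ≤ Real.cos (2*b)) (hcab : Real.cos (2*b) ≤ Real.cos (2*a))
    (θ : ℝ) : gg a θ + gg a (Real.pi/2 - θ) ≤ gg b θ + gg b (Real.pi/2 - θ) := by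
  have h1a := Real.sin_sq_add_cos_sq a
  have h1b := Real.sin_sq_add_cos_sq b
  have h2 := Real.sin_sq_add_cos_sq θ
  have h2a : Real.cos (2*a) = Real.cos a ^ 2 - Real.sin a ^ 2 := by
    rw [Real.cos_two_mul]; linarith
  have h2b : Real.cos (2*b) = Real.cos b ^ 2 - Real.sin b ^ 2 := by
    rw [Real.cos_two_mul]; linarith
  have hcA := compl (Real.cos a) (Real.sin a) (Real.cos θ) (Real.sin θ) h1a h2
  have hcB := compl (Real.cos b) (Real.sin b) (Real.cos θ) (Real.sin θ) h1b h2
  have hrefA : gg a (Real.pi/2 - θ)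
      = Real.sqrt (1 - (Real.cos a ^ 2 * Real.cos θ ^ 2 + Real.sin a ^ 2 * Real.sin θ ^ 2)) := by
    unfold gg
    rw [Real.cos_pi_div_two_sub, Real.sin_pi_div_two_sub, hcA]
  have hrefB : gg b (Real.pi/2 - θ)
      = Real.sqrt (1 - (Real.cos b ^ 2 * Real.cos θ ^ 2 + Real.sin b ^ 2 * Real.sin θ ^ 2)) := by
    unfold gg
    rw [Real.cos_pi_div_two_sub, Real.sin_pi_div_two_sub, hcB]
  have hA0 : 0 ≤ Real.cos a ^ 2 * Real.cos θ ^ 2 + Real.sin a ^ 2 * Real.sin θ ^ 2 := by positivity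
  have hB0 : 0 ≤ Real.cos b ^ 2 * Real.cos θ ^ 2 + Real.sin b ^ 2 * Real.sin θ ^ 2 := by positivity
  have hA1 : Real.cos a ^ 2 * Real.cos θ ^ 2 + Real.sin a ^ 2 * Real.sin θ ^ 2 ≤ 1 := by
    nlinarith [sq_nonneg (Real.cos a * Real.sin θ), sq_nonneg (Real.sin a * Real.cos θ)]
  have hB1 : Real.cos b ^ 2 * Real.cos θ ^ 2 + Real.sin b ^ 2 * Real.sin θ ^ 2 ≤ 1 := by
    nlinarith [sq_nonneg (Real.cos b * Real.sin θ), sq_nonneg (Real.sin b * Real.cos θ)]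
  have hsq : Real.cos (2*b) ^ 2 ≤ Real.cos (2*a) ^ 2 := by nlinarith
  have hprod : (Real.cos a ^ 2 * Real.cos θ ^ 2 + Real.sin a ^ 2 * Real.sin θ ^ 2) *
      (1 - (Real.cos a ^ 2 * Real.cos θ ^ 2 + Real.sin a ^ 2 * Real.sin θ ^ 2))
      ≤ (Real.cos b ^ 2 * Real.cos θ ^ 2 + Real.sin b ^ 2 * Real.sin θ ^ 2) *
      (1 - (Real.cos b ^ 2 * Real.cos θ ^ 2 + Real.sin b ^ 2 * Real.sin θ ^ 2)) := by
    rw [keylem (Real.cos a) (Real.sin a) (Real.cos θ) (Real.sin θ) h1a h2,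
      keylem (Real.cos b) (Real.sin b) (Real.cos θ) (Real.sin θ) h1b h2, ← h2a, ← h2b]
    have hs : (0:ℝ) ≤ (1/2 - Real.sin θ ^ 2)^2 := sq_nonneg _
    nlinarith [mul_le_mul_of_nonneg_right hsq hs]
  rw [hrefA, hrefB]
  exact sqrtsum hA0 hA1 hB0 hB1 hprod

theorem stmt6 : MonotoneOn (fun a : ℝ => Real.cos a * ellE (Real.sqrt (1 - Real.tan a ^ 2)))
    (Ioo 0 (Real.pi/4)) := by
  intro a ha b hb hab
  simp only
  rw [reduce ha, reduce hb]
  have refl : ∀ c : ℝ, (∫ θ in (0:ℝ)..(Real.pi/2), gg c θ)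
      = ∫ θ in (0:ℝ)..(Real.pi/2), gg c (Real.pi/2 - θ) := by
    intro c
    rw [intervalIntegral.integral_comp_sub_left (gg c) (Real.pi/2)]
    norm_num
  have hint : ∀ c : ℝ, IntervalIntegrable (fun θ => gg c θ) MeasureTheory.volume 0 (Real.pi/2) :=
    fun c => (gg_cont c).intervalIntegrable _ _
  have hint' : ∀ c : ℝ, IntervalIntegrable (fun θ => gg c (Real.pi/2 - θ))
      MeasureTheory.volume 0 (Real.pi/2) :=
    fun c => ((gg_cont c).comp (by fun_prop)).intervalIntegrable _ _
  have split : ∀ c : ℝ, (∫ θ in (0:ℝ)..(Real.pi/2), gg c θ)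
      = (1/2) * ∫ θ in (0:ℝ)..(Real.pi/2), (gg c θ + gg c (Real.pi/2 - θ)) := by
    intro c
    rw [intervalIntegral.integral_add (hint c) (hint' c), ← refl c]
    ring
  rw [split a, split b]
  have hpi := Real.pi_pos
  have hcab : Real.cos (2*b) ≤ Real.cos (2*a) := by
    apply Real.cos_le_cos_of_nonneg_of_le_pi (by linarith [ha.1]) (by linarith [hb.2]) (by linarith)
  have hcb : 0 ≤ Real.cos (2*b) := by
    apply Real.cos_nonneg_of_mem_Icc
    constructor
    · linarith [hb.1]
    · linarith [hb.2]
  have hmono : (∫ θ in (0:ℝ)..(Real.pi/2), (gg a θ + gg a (Real.pi/2 - θ)))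
      ≤ ∫ θ in (0:ℝ)..(Real.pi/2), (gg b θ + gg b (Real.pi/2 - θ)) :=
    intervalIntegral.integral_mono_on (by positivity)
      ((hint a).add (hint' a)) ((hint b).add (hint' b)) (fun θ _ => pairmono hcb hcab θ)
  linarith
end

section
/- The derivative of Φ(a) = cos(a)·E(√(1-tan²a)) satisfies Φ'(a) < 1/2 for every a in (0, π/4). -/
open Real Set

/-!
Since `cos a · √(1 - (1 - tan² a) sin² θ) = √(cos² a cos² θ + sin² a sin² θ)`, the function
`Φ(a) = cos a · E(√(1 - tan² a))` is the quarter perimeter of the ellipse with semi-axes `cos a`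
and `sin a`. Differentiating under the integral sign,
`Φ'(a) = -∫₀^{π/2} sin a cos a cos 2θ / √(cos² a cos² θ + sin² a sin² θ) dθ`.
For `a < π/4` the radicand is at least `sin² a`, so the integrand is `≤ 0` on `[0, π/4]` and
`≤ -cos a cos 2θ` on `[π/4, π/2]`; hence `Φ'(a) ≤ cos a / 2 < 1/2`.
-/

noncomputable def ellipseSpeedSq (a θ : ℝ) : ℝ :=
  cos a ^ 2 * cos θ ^ 2 + sin a ^ 2 * sin θ ^ 2

@[fun_prop]
lemma continuous_ellipseSpeedSq (a : ℝ) : Continuous (ellipseSpeedSq a) := by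
  unfold ellipseSpeedSq
  fun_prop

lemma hasDerivAt_ellipseSpeedSq (a θ : ℝ) :
    HasDerivAt (ellipseSpeedSq · θ) (-(2 * sin a * cos a * cos (2 * θ))) a := by
  have h := (((hasDerivAt_cos a).pow 2).mul_const (cos θ ^ 2)).add
    (((hasDerivAt_sin a).pow 2).mul_const (sin θ ^ 2))
  exact h.congr_deriv (by rw [cos_two_mul']; ring)

lemma sin_sq_le_cos_sq_of_le_pi_div_four {a : ℝ} (h₀ : 0 ≤ a) (h₁ : a ≤ π / 4) :
    sin a ^ 2 ≤ cos a ^ 2 := by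
  have : 0 ≤ cos (2 * a) := cos_nonneg_of_mem_Icc ⟨by linarith [pi_pos], by linarith⟩
  rw [cos_two_mul'] at this
  linarith

lemma sin_sq_le_ellipseSpeedSq {a : ℝ} (h : sin a ^ 2 ≤ cos a ^ 2) (θ : ℝ) :
    sin a ^ 2 ≤ ellipseSpeedSq a θ := by
  have := mul_le_mul_of_nonneg_right h (sq_nonneg (cos θ))
  have := sin_sq_add_cos_sq θ
  unfold ellipseSpeedSq
  nlinarith

lemma abs_sin_le_sqrt_ellipseSpeedSq {a : ℝ} (h : sin a ^ 2 ≤ cos a ^ 2) (θ : ℝ) :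
    |sin a| ≤ √(ellipseSpeedSq a θ) := by
  rw [← sqrt_sq_eq_abs]
  exact sqrt_le_sqrt (sin_sq_le_ellipseSpeedSq h θ)

lemma ellipseSpeedSq_pos {a : ℝ} (hs : sin a ≠ 0) (h : sin a ^ 2 ≤ cos a ^ 2) (θ : ℝ) :
    0 < ellipseSpeedSq a θ :=
  (pow_pos (abs_pos.2 hs) 2).trans_le ((sq_abs _).trans_le (sin_sq_le_ellipseSpeedSq h θ))

lemma cos_mul_sqrt_one_sub_tan_sq {x : ℝ} (hx : 0 < cos x) (θ : ℝ) :
    cos x * √(1 - (1 - tan x ^ 2) * sin θ ^ 2) = √(ellipseSpeedSq x θ) := by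
  have key : ellipseSpeedSq x θ = cos x ^ 2 * (1 - (1 - tan x ^ 2) * sin θ ^ 2) := by
    rw [ellipseSpeedSq, tan_eq_sin_div_cos]
    field_simp
    linear_combination cos x ^ 2 * sin_sq_add_cos_sq θ
  rw [key, sqrt_mul (sq_nonneg _), sqrt_sq hx.le]

lemma cos_mul_ellE_sqrt_one_sub_tan_sq {x : ℝ} (hx : 0 < cos x) (h : sin x ^ 2 ≤ cos x ^ 2) :
    cos x * ellE √(1 - tan x ^ 2) = ∫ θ in 0..π/2, √(ellipseSpeedSq x θ) := by
  have htan : tan x ^ 2 ≤ 1 := by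
    rwa [tan_eq_sin_div_cos, div_pow, div_le_one (pow_pos hx 2)]
  rw [ellE, sq_sqrt (sub_nonneg.2 htan), ← intervalIntegral.integral_const_mul]
  simp_rw [cos_mul_sqrt_one_sub_tan_sq hx]

lemma hasDerivAt_sqrt_ellipseSpeedSq {a θ : ℝ} (h : ellipseSpeedSq a θ ≠ 0) :
    HasDerivAt (fun x => √(ellipseSpeedSq x θ))
      (-(sin a * cos a * cos (2 * θ)) / √(ellipseSpeedSq a θ)) a := by
  convert (hasDerivAt_ellipseSpeedSq a θ).sqrt h using 1
  ring

lemma norm_deriv_sqrt_ellipseSpeedSq_le_one {a : ℝ} (h : sin a ^ 2 ≤ cos a ^ 2) (θ : ℝ) :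
    ‖-(sin a * cos a * cos (2 * θ)) / √(ellipseSpeedSq a θ)‖ ≤ 1 := by
  rw [norm_div, norm_neg, norm_mul, norm_mul, Real.norm_of_nonneg (sqrt_nonneg _)]
  simp only [Real.norm_eq_abs]
  refine div_le_one_of_le₀ ?_ (sqrt_nonneg _)
  calc |sin a| * |cos a| * |cos (2 * θ)| ≤ |sin a| * 1 * 1 := by
        gcongr <;> exact abs_cos_le_one _
    _ ≤ √(ellipseSpeedSq a θ) := by simpa using abs_sin_le_sqrt_ellipseSpeedSq h θ

lemma hasDerivAt_integral_sqrt_ellipseSpeedSq {a : ℝ} (ha : a ∈ Ioo 0 (π / 4)) :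
    HasDerivAt (fun x => ∫ θ in 0..π/2, √(ellipseSpeedSq x θ))
      (∫ θ in 0..π/2, -(sin a * cos a * cos (2 * θ)) / √(ellipseSpeedSq a θ)) a := by
  have hsin : ∀ x ∈ Ioo 0 (π / 4), sin x ≠ 0 := fun x hx =>
    (sin_pos_of_pos_of_lt_pi hx.1 (by linarith [hx.2, pi_pos])).ne'
  have hsq : ∀ x ∈ Ioo 0 (π / 4), sin x ^ 2 ≤ cos x ^ 2 := fun x hx =>
    sin_sq_le_cos_sq_of_le_pi_div_four hx.1.le hx.2.le
  have hpos := ellipseSpeedSq_pos (hsin a ha) (hsq a ha)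
  have hF' : Continuous fun θ => -(sin a * cos a * cos (2 * θ)) / √(ellipseSpeedSq a θ) := by
    fun_prop (disch := exact fun θ => (sqrt_pos.2 (hpos θ)).ne')
  refine (intervalIntegral.hasDerivAt_integral_of_dominated_loc_of_deriv_le
    (F' := fun x θ => -(sin x * cos x * cos (2 * θ)) / √(ellipseSpeedSq x θ))
    (bound := fun _ => 1)
    (Ioo_mem_nhds ha.1 ha.2)
    (.of_forall fun x => (continuous_ellipseSpeedSq x).sqrt.aestronglyMeasurable)
    ((continuous_ellipseSpeedSq a).sqrt.intervalIntegrable _ _)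
    hF'.aestronglyMeasurable ?_ intervalIntegrable_const ?_).2
  · exact .of_forall fun θ _ x hx => norm_deriv_sqrt_ellipseSpeedSq_le_one (hsq x hx) θ
  · exact .of_forall fun θ _ x hx =>
      hasDerivAt_sqrt_ellipseSpeedSq (ellipseSpeedSq_pos (hsin x hx) (hsq x hx) θ).ne'

lemma integral_cos_two_mul_pi_div_four_pi_div_two :
    ∫ θ in (π/4)..(π/2), cos (2 * θ) = -1 / 2 := by
  rw [intervalIntegral.integral_comp_mul_left (fun x => cos x) two_ne_zero, integral_cos,
    show 2 * (π / 2) = π by ring, show 2 * (π / 4) = π / 2 by ring]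
  norm_num

lemma integral_deriv_sqrt_ellipseSpeedSq_le {a : ℝ} (ha : a ∈ Ioo 0 (π / 4)) :
    ∫ θ in 0..π/2, -(sin a * cos a * cos (2 * θ)) / √(ellipseSpeedSq a θ) ≤ cos a / 2 := by
  have hpi := pi_pos
  have hsq := sin_sq_le_cos_sq_of_le_pi_div_four ha.1.le ha.2.le
  have hsin : 0 < sin a := sin_pos_of_pos_of_lt_pi ha.1 (by linarith [ha.2])
  have hcos : 0 < cos a := cos_pos_of_mem_Ioo ⟨by linarith [ha.1], by linarith [ha.2]⟩
  have hpos := ellipseSpeedSq_pos hsin.ne' hsq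
  set f := fun θ => -(sin a * cos a * cos (2 * θ)) / √(ellipseSpeedSq a θ)
  have hf : Continuous f := by
    fun_prop (disch := exact fun θ => (sqrt_pos.2 (hpos θ)).ne')
  have left : ∫ θ in 0..π/4, f θ ≤ 0 := by
    refine (intervalIntegral.integral_mono_on (g := fun _ => 0) (by positivity)
      (hf.intervalIntegrable _ _) intervalIntegrable_const fun θ hθ => ?_).trans_eq
      intervalIntegral.integral_zero
    have : 0 ≤ cos (2 * θ) := cos_nonneg_of_mem_Icc ⟨by linarith [hθ.1], by linarith [hθ.2]⟩
    exact div_nonpos_of_nonpos_of_nonneg (by simp only [neg_nonpos]; positivity) (sqrt_nonneg _)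
  have right : ∫ θ in (π/4)..(π/2), f θ ≤ cos a / 2 := by
    refine (intervalIntegral.integral_mono_on (g := fun θ => cos a * -cos (2 * θ))
      (by linarith) (hf.intervalIntegrable _ _)
      ((by fun_prop : Continuous fun θ => cos a * -cos (2 * θ)).intervalIntegrable _ _)
      fun θ hθ => ?_).trans_eq ?_
    · have hc : cos (2 * θ) ≤ 0 := cos_nonpos_of_pi_div_two_le_of_le (by linarith [hθ.1])
        (by linarith [hθ.2])
      have hratio : sin a / √(ellipseSpeedSq a θ) ≤ 1 :=
        div_le_one_of_le₀ ((le_abs_self _).trans (abs_sin_le_sqrt_ellipseSpeedSq hsq θ))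
          (sqrt_nonneg _)
      calc f θ = cos a * -cos (2 * θ) * (sin a / √(ellipseSpeedSq a θ)) := by
            simp only [f]; ring
        _ ≤ cos a * -cos (2 * θ) * 1 := by gcongr; nlinarith
        _ = cos a * -cos (2 * θ) := mul_one _
    · rw [intervalIntegral.integral_const_mul, intervalIntegral.integral_neg,
        integral_cos_two_mul_pi_div_four_pi_div_two]
      ring
  rw [← intervalIntegral.integral_add_adjacent_intervals (b := π / 4) (hf.intervalIntegrable _ _)
    (hf.intervalIntegrable _ _)]
  linarith

theorem stmt7 : ∀ a ∈ Ioo (0:ℝ) (Real.pi/4),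
    deriv (fun a : ℝ => Real.cos a * ellE (Real.sqrt (1 - Real.tan a ^ 2))) a < 1/2 := by
  intro a ha
  have hpi := pi_pos
  have hΦ : (fun x => cos x * ellE √(1 - tan x ^ 2)) =ᶠ[nhds a]
      fun x => ∫ θ in 0..π/2, √(ellipseSpeedSq x θ) := by
    filter_upwards [Ioo_mem_nhds ha.1 ha.2] with x hx
    exact cos_mul_ellE_sqrt_one_sub_tan_sq
      (cos_pos_of_mem_Ioo ⟨by linarith [hx.1], by linarith [hx.2]⟩)
      (sin_sq_le_cos_sq_of_le_pi_div_four hx.1.le hx.2.le)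
  rw [hΦ.deriv_eq, (hasDerivAt_integral_sqrt_ellipseSpeedSq ha).deriv]
  have hcos : cos a < 1 := by
    simpa using cos_lt_cos_of_nonneg_of_le_pi le_rfl (by linarith [ha.2]) ha.1
  linarith [integral_deriv_sqrt_ellipseSpeedSq_le ha]
end

section
/- For a in (0,π/4) and β = √(1-tan²a), the derivative of Φ(a) = cos(a)·E(β(a)) equals (√((1-β²)(2-β²))/β²)·(K(β) - (2/(2-β²))·E(β)). -/
open Real Set

/-!
Differentiating under the integral sign gives `E'(k) = (E(k) - K(k)) / k` for `|k| < 1`; the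
domination comes from `|x| sin² θ / √(1 - x² sin² θ) ≤ c / √(1 - c²)` for `|x| ≤ c < 1`.
The chain rule through `β(a) = √(1 - tan² a)` then gives the claim, since
`1 - β² = tan² a` and `2 - β² = 1 + tan² a = 1 / cos² a`.
-/

lemma one_sub_sq_le_one_sub_sq_mul_sin_sq (k θ : ℝ) :
    1 - k ^ 2 ≤ 1 - k ^ 2 * sin θ ^ 2 := by
  nlinarith [sin_sq_le_one θ, sq_nonneg k]

lemma one_sub_sq_mul_sin_sq_pos {k : ℝ} (hk : |k| < 1) (θ : ℝ) :
    0 < 1 - k ^ 2 * sin θ ^ 2 := by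
  have : k ^ 2 < 1 := (sq_lt_one_iff_abs_lt_one k).2 hk
  linarith [one_sub_sq_le_one_sub_sq_mul_sin_sq k θ]

lemma hasDerivAt_sqrt_one_sub_sq_mul_sin_sq {k : ℝ} (hk : |k| < 1) (θ : ℝ) :
    HasDerivAt (fun x => √(1 - x ^ 2 * sin θ ^ 2))
      (-(k * sin θ ^ 2) / √(1 - k ^ 2 * sin θ ^ 2)) k := by
  have hD := one_sub_sq_mul_sin_sq_pos hk θ
  convert (((hasDerivAt_pow 2 k).mul_const (sin θ ^ 2)).const_sub 1).sqrt hD.ne' using 1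
  field_simp
  ring

lemma norm_neg_mul_sin_sq_div_sqrt_le {x c : ℝ} (hx : |x| ≤ c) (hc : c < 1) (θ : ℝ) :
    ‖-(x * sin θ ^ 2) / √(1 - x ^ 2 * sin θ ^ 2)‖ ≤ c / √(1 - c ^ 2) := by
  have hc0 : 0 ≤ c := (abs_nonneg x).trans hx
  have hxc : x ^ 2 ≤ c ^ 2 := sq_le_sq' (abs_le.1 hx).1 (abs_le.1 hx).2
  have hnum : |x| * sin θ ^ 2 ≤ c :=
    calc |x| * sin θ ^ 2 ≤ c * 1 := mul_le_mul hx (sin_sq_le_one θ) (sq_nonneg _) hc0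
      _ = c := mul_one c
  rw [norm_div, norm_neg, norm_mul, norm_pow, Real.norm_eq_abs, Real.norm_eq_abs, sq_abs,
    Real.norm_of_nonneg (sqrt_nonneg _)]
  apply div_le_div₀ hc0 hnum (sqrt_pos.2 (by nlinarith))
  exact sqrt_le_sqrt (by linarith [one_sub_sq_le_one_sub_sq_mul_sin_sq x θ])

lemma integral_neg_mul_sin_sq_div_sqrt {k : ℝ} (hk : |k| < 1) :
    ∫ θ in (0:ℝ)..π / 2, -(k * sin θ ^ 2) / √(1 - k ^ 2 * sin θ ^ 2) =
      (ellE k - ellK k) / k := by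
  rcases eq_or_ne k 0 with rfl | hk0
  · -- both sides vanish, the right one through `x / 0 = 0`
    simp
  have hsqrt : ∀ θ, √(1 - k ^ 2 * sin θ ^ 2) ≠ 0 := fun θ =>
    (sqrt_pos.2 (one_sub_sq_mul_sin_sq_pos hk θ)).ne'
  have hintegrand : (fun θ => -(k * sin θ ^ 2) / √(1 - k ^ 2 * sin θ ^ 2)) =
      fun θ => (√(1 - k ^ 2 * sin θ ^ 2) - 1 / √(1 - k ^ 2 * sin θ ^ 2)) / k := by
    funext θ
    have hsq := sq_sqrt (one_sub_sq_mul_sin_sq_pos hk θ).le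
    field_simp [hsqrt θ]
    linear_combination -hsq
  have hcont : Continuous fun θ => √(1 - k ^ 2 * sin θ ^ 2) := by fun_prop
  have hcont' : Continuous fun θ => 1 / √(1 - k ^ 2 * sin θ ^ 2) :=
    continuous_const.div hcont hsqrt
  rw [hintegrand, intervalIntegral.integral_div, intervalIntegral.integral_sub
    (hcont.intervalIntegrable _ _) (hcont'.intervalIntegrable _ _)]
  rfl

theorem hasDerivAt_ellE {k : ℝ} (hk : |k| < 1) :
    HasDerivAt ellE ((ellE k - ellK k) / k) k := by
  set c := (1 + |k|) / 2 with hc_def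
  have hc : c < 1 := by linarith
  have hball : ∀ x ∈ Metric.ball k ((1 - |k|) / 2), |x| ≤ c := fun x hx => by
    rw [Metric.mem_ball, Real.dist_eq] at hx
    linarith [abs_sub_abs_le_abs_sub x k, abs_sub_comm x k]
  have hF'k : Continuous fun θ => -(k * sin θ ^ 2) / √(1 - k ^ 2 * sin θ ^ 2) :=
    Continuous.div (by fun_prop) (by fun_prop) fun θ =>
      (sqrt_pos.2 (one_sub_sq_mul_sin_sq_pos hk θ)).ne'
  obtain ⟨-, h⟩ := intervalIntegral.hasDerivAt_integral_of_dominated_loc_of_deriv_le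
    (F := fun x θ => √(1 - x ^ 2 * sin θ ^ 2))
    (F' := fun x θ => -(x * sin θ ^ 2) / √(1 - x ^ 2 * sin θ ^ 2))
    (bound := fun _ => c / √(1 - c ^ 2)) (a := 0) (b := π / 2) (μ := MeasureTheory.volume)
    (Metric.ball_mem_nhds k (by linarith))
    (.of_forall fun _ => (by fun_prop : Continuous _).aestronglyMeasurable)
    ((by fun_prop : Continuous _).intervalIntegrable _ _)
    hF'k.aestronglyMeasurable
    (.of_forall fun θ _ x hx => norm_neg_mul_sin_sq_div_sqrt_le (hball x hx) hc θ)
    intervalIntegrable_const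
    (.of_forall fun θ _ x hx =>
      hasDerivAt_sqrt_one_sub_sq_mul_sin_sq ((hball x hx).trans_lt hc) θ)
  rwa [integral_neg_mul_sin_sq_div_sqrt hk] at h

lemma hasDerivAt_sqrt_one_sub_tan_sq {a : ℝ} (hcos : cos a ≠ 0) (htan : tan a ^ 2 < 1) :
    HasDerivAt (fun x => √(1 - tan x ^ 2)) (-tan a / (cos a ^ 2 * √(1 - tan a ^ 2))) a := by
  convert (((hasDerivAt_tan hcos).fun_pow 2).const_sub 1).sqrt (by linarith) using 1
  have : √(1 - tan a ^ 2) ≠ 0 := (sqrt_pos.2 (by linarith)).ne'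
  field_simp
  ring

lemma hasDerivAt_cos_mul_ellE_sqrt_one_sub_tan_sq {a : ℝ} (hcos : 0 < cos a)
    (htan0 : tan a ≠ 0) (htan : tan a ^ 2 < 1) :
    HasDerivAt (fun x => cos x * ellE √(1 - tan x ^ 2))
      (sin a / cos a ^ 2 / (1 - tan a ^ 2) *
        (ellK √(1 - tan a ^ 2) - 2 * cos a ^ 2 * ellE √(1 - tan a ^ 2))) a := by
  set β := √(1 - tan a ^ 2) with hβ
  have hβ0 : 0 < β := sqrt_pos.2 (by linarith)
  have hβ1 : |β| < 1 := by
    rw [abs_of_pos hβ0, sqrt_lt' one_pos]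
    linarith [pow_pos (abs_pos.2 htan0) 2, sq_abs (tan a)]
  have hβsq : β ^ 2 = 1 - tan a ^ 2 := sq_sqrt (by linarith)
  refine ((hasDerivAt_cos a).fun_mul
    ((hasDerivAt_ellE hβ1).comp a (hasDerivAt_sqrt_one_sub_tan_sq hcos.ne' htan))).congr_deriv ?_
  have hβcos : β ^ 2 * cos a ^ 2 = cos a ^ 2 - sin a ^ 2 := by
    rw [hβsq, tan_eq_sin_div_cos]
    field_simp
  rw [Function.comp_apply, ← hβ, ← hβsq, tan_eq_sin_div_cos]
  field_simp
  linear_combination (sin a * ellE β) * (sin_sq_add_cos_sq a - hβcos)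

lemma sqrt_tan_sq_mul_one_add_tan_sq {a : ℝ} (hcos : 0 < cos a) (hsin : 0 ≤ sin a) :
    √(tan a ^ 2 * (1 + tan a ^ 2)) = sin a / cos a ^ 2 := by
  rw [← inv_inv (1 + tan a ^ 2), inv_one_add_tan_sq hcos.ne', tan_eq_sin_div_cos,
    ← sqrt_sq (by positivity : 0 ≤ sin a / cos a ^ 2)]
  congr 1
  field_simp

theorem stmt8 : ∀ a ∈ Ioo (0:ℝ) (Real.pi/4),
    deriv (fun a : ℝ => Real.cos a * ellE (Real.sqrt (1 - Real.tan a ^ 2))) a =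
      (Real.sqrt ((1 - (Real.sqrt (1 - Real.tan a ^ 2))^2) *
          (2 - (Real.sqrt (1 - Real.tan a ^ 2))^2)) / (Real.sqrt (1 - Real.tan a ^ 2))^2) *
        (ellK (Real.sqrt (1 - Real.tan a ^ 2)) -
          (2 / (2 - (Real.sqrt (1 - Real.tan a ^ 2))^2)) *
            ellE (Real.sqrt (1 - Real.tan a ^ 2))) := by
  rintro a ⟨ha0, ha1⟩
  have hcos : 0 < cos a := cos_pos_of_mem_Ioo ⟨by linarith [pi_pos], by linarith⟩
  have hsin : 0 < sin a := sin_pos_of_pos_of_lt_pi ha0 (by linarith)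
  have htan : tan a ^ 2 < 1 := by
    have := tan_lt_tan_of_lt_of_lt_pi_div_two (by linarith [pi_pos]) (by linarith) ha1
    rw [tan_pi_div_four] at this
    exact pow_lt_one₀ (tan_pos_of_pos_of_lt_pi_div_two ha0 (by linarith)).le this two_ne_zero
  have h1 : 1 - (1 - tan a ^ 2) = tan a ^ 2 := by ring
  have h2 : 2 - (1 - tan a ^ 2) = 1 + tan a ^ 2 := by ring
  rw [(hasDerivAt_cos_mul_ellE_sqrt_one_sub_tan_sq hcos (tan_pos_of_pos_of_lt_pi_div_two ha0 (by linarith)).ne' htan).deriv, sq_sqrt (by linarith), h1, h2,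
    sqrt_tan_sq_mul_one_add_tan_sq hcos hsin.le, div_eq_mul_inv 2, inv_one_add_tan_sq hcos.ne']
end

section
/- For every a in (0,π/4], 1 ≤ cos(a)·E(√(1-tan²a)) ≤ π/(2√2), with Φ(π/4) = π/(2√2) and lim_{a→0+} Φ(a) = 1. -/
open Real Set

/-!
With `c = cos a`, `s = sin a`, one has
`cos a · E(√(1 - tan² a)) = ∫₀^{π/2} √(c² cos² θ + s² sin² θ) dθ`,
a quarter perimeter of an ellipse whose semi-axes satisfy `c² + s² = 1`. Pointwise,
Cauchy–Schwarz bounds the integrand below by `c² cos θ + s² sin θ`, whose integral is `1`;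
AM–GM gives `√X ≤ (X + 1/2)/√2`, and `∫ X = π/4` yields `π/(2√2)`. For the limit, the integrand
is at most `c cos θ + s sin θ`, whose integral `cos a + sin a` tends to `1`.
-/

open Filter Topology intervalIntegral

/-- Arc length of `θ ↦ (x sin θ, y cos θ)` over `[0, π/2]`. -/
noncomputable def ellipseQuarterPerimeter (x y : ℝ) : ℝ :=
  ∫ θ in (0:ℝ)..π / 2, √(x ^ 2 * cos θ ^ 2 + y ^ 2 * sin θ ^ 2)

lemma ellE_zero : ellE 0 = π / 2 := by
  simp [ellE]

lemma mul_ellE_sqrt_one_sub_sq {c t : ℝ} (hc : 0 ≤ c) (ht : t ^ 2 ≤ 1) :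
    c * ellE √(1 - t ^ 2) = ellipseQuarterPerimeter c (c * t) := by
  rw [ellE, ellipseQuarterPerimeter, ← integral_const_mul]
  refine integral_congr fun θ _ => ?_
  have hrad : c ^ 2 * (1 - (1 - t ^ 2) * sin θ ^ 2) =
      c ^ 2 * cos θ ^ 2 + (c * t) ^ 2 * sin θ ^ 2 := by
    linear_combination -c ^ 2 * sin_sq_add_cos_sq θ
  simp only [sq_sqrt (sub_nonneg.2 ht)]
  rw [← hrad, sqrt_mul (sq_nonneg c), sqrt_sq hc]

lemma cos_mul_ellE_sqrt_one_sub_tan_sq_s9 {a : ℝ} (ha : a ∈ Icc (-(π / 4)) (π / 4)) :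
    cos a * ellE √(1 - tan a ^ 2) = ellipseQuarterPerimeter (cos a) (sin a) := by
  have hsub : Icc (-(π / 4)) (π / 4) ⊆ Ioo (-(π / 2)) (π / 2) := fun x hx =>
    ⟨by linarith [hx.1, pi_pos], by linarith [hx.2, pi_pos]⟩
  have hend : π / 4 ∈ Icc (-(π / 4)) (π / 4) := ⟨by linarith [pi_pos], le_rfl⟩
  have hcos : 0 < cos a := cos_pos_of_mem_Ioo (hsub ha)
  have htan : |tan a| ≤ 1 := by
    have hmono := strictMonoOn_tan.monotoneOn
    rw [abs_le]
    constructor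
    · calc -1 = tan (-(π / 4)) := by rw [tan_neg, tan_pi_div_four]
        _ ≤ tan a := hmono (hsub ⟨le_rfl, by linarith [pi_pos]⟩) (hsub ha) ha.1
    · calc tan a ≤ tan (π / 4) := hmono (hsub ha) (hsub hend) ha.2
        _ = 1 := tan_pi_div_four
  rw [mul_ellE_sqrt_one_sub_sq hcos.le ((sq_le_one_iff_abs_le_one _).2 htan), mul_comm (cos a),
    tan_mul_cos hcos.ne']

lemma integral_mul_cos_add_mul_sin (p q : ℝ) :
    ∫ θ in (0:ℝ)..π / 2, (p * cos θ + q * sin θ) = p + q := by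
  rw [integral_add (Continuous.intervalIntegrable (by fun_prop) _ _)
      (Continuous.intervalIntegrable (by fun_prop) _ _),
    integral_const_mul, integral_const_mul, integral_cos, integral_sin]
  simp

lemma integral_mul_cos_sq_add_mul_sin_sq (p q : ℝ) :
    ∫ θ in (0:ℝ)..π / 2, (p * cos θ ^ 2 + q * sin θ ^ 2) = π / 4 * (p + q) := by
  rw [integral_add (Continuous.intervalIntegrable (by fun_prop) _ _)
      (Continuous.intervalIntegrable (by fun_prop) _ _),
    integral_const_mul, integral_const_mul, integral_cos_sq, integral_sin_sq]
  simp only [sin_pi_div_two, cos_pi_div_two, sin_zero, cos_zero]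
  ring

lemma intervalIntegrable_ellipse_integrand (x y : ℝ) :
    IntervalIntegrable (fun θ => √(x ^ 2 * cos θ ^ 2 + y ^ 2 * sin θ ^ 2)) MeasureTheory.volume
      0 (π / 2) :=
  Continuous.intervalIntegrable (by fun_prop) _ _

lemma one_le_ellipseQuarterPerimeter {x y : ℝ} (h : x ^ 2 + y ^ 2 = 1) :
    1 ≤ ellipseQuarterPerimeter x y := by
  calc (1 : ℝ) = ∫ θ in (0:ℝ)..π / 2, (x ^ 2 * cos θ + y ^ 2 * sin θ) := by
        rw [integral_mul_cos_add_mul_sin, h]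
    _ ≤ ellipseQuarterPerimeter x y := by
        refine integral_mono_on (by positivity) (Continuous.intervalIntegrable (by fun_prop) _ _)
          (intervalIntegrable_ellipse_integrand x y) fun θ _ =>
            (le_abs_self _).trans (abs_le_sqrt ?_)
        nlinarith [sq_nonneg (x * y * (cos θ - sin θ)), sin_sq_add_cos_sq θ,
          congrArg (· * (x ^ 2 * cos θ ^ 2 + y ^ 2 * sin θ ^ 2)) h]

lemma ellipseQuarterPerimeter_le {x y : ℝ} (h : x ^ 2 + y ^ 2 = 1) :
    ellipseQuarterPerimeter x y ≤ π / (2 * √2) := by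
  have hs2 : 0 < √2 := by positivity
  calc ellipseQuarterPerimeter x y
      ≤ ∫ θ in (0:ℝ)..π / 2, (x ^ 2 * cos θ ^ 2 + y ^ 2 * sin θ ^ 2 + 1 / 2) / √2 := by
        refine integral_mono_on (by positivity) (intervalIntegrable_ellipse_integrand x y)
          (Continuous.intervalIntegrable (by fun_prop) _ _) fun θ _ => ?_
        have hX : 0 ≤ x ^ 2 * cos θ ^ 2 + y ^ 2 * sin θ ^ 2 := by positivity
        rw [le_div_iff₀ hs2]
        nlinarith [sq_nonneg (√(x ^ 2 * cos θ ^ 2 + y ^ 2 * sin θ ^ 2) * √2 - 1), sq_sqrt hX,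
          sq_sqrt (zero_le_two : (0:ℝ) ≤ 2)]
    _ = π / (2 * √2) := by
        rw [integral_div, integral_add (Continuous.intervalIntegrable (by fun_prop) _ _)
          intervalIntegrable_const, integral_mul_cos_sq_add_mul_sin_sq, integral_const, h,
          smul_eq_mul]
        field_simp
        ring

lemma ellipseQuarterPerimeter_le_add {x y : ℝ} (hx : 0 ≤ x) (hy : 0 ≤ y) :
    ellipseQuarterPerimeter x y ≤ x + y := by
  calc ellipseQuarterPerimeter x y ≤ ∫ θ in (0:ℝ)..π / 2, (x * cos θ + y * sin θ) := by
        refine integral_mono_on (by positivity) (intervalIntegrable_ellipse_integrand x y)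
          (Continuous.intervalIntegrable (by fun_prop) _ _) fun θ hθ => ?_
        have hc : 0 ≤ cos θ := cos_nonneg_of_mem_Icc ⟨by linarith [hθ.1, pi_pos], hθ.2⟩
        have hs : 0 ≤ sin θ := sin_nonneg_of_nonneg_of_le_pi hθ.1 (by linarith [hθ.2, pi_pos])
        rw [sqrt_le_left (by positivity)]
        nlinarith [mul_nonneg (mul_nonneg hx hc) (mul_nonneg hy hs)]
    _ = x + y := integral_mul_cos_add_mul_sin x y

theorem stmt9 :
    (∀ a ∈ Ioc (0:ℝ) (Real.pi/4),
      1 ≤ Real.cos a * ellE (Real.sqrt (1 - Real.tan a ^ 2)) ∧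
      Real.cos a * ellE (Real.sqrt (1 - Real.tan a ^ 2)) ≤ Real.pi / (2 * Real.sqrt 2)) ∧
    Real.cos (Real.pi/4) * ellE (Real.sqrt (1 - Real.tan (Real.pi/4) ^ 2)) =
      Real.pi / (2 * Real.sqrt 2) ∧
    Filter.Tendsto (fun a : ℝ => Real.cos a * ellE (Real.sqrt (1 - Real.tan a ^ 2)))
      (nhdsWithin 0 (Ioi 0)) (nhds 1) := by
  have hΦ : ∀ a ∈ Ioc (0:ℝ) (π / 4),
      cos a * ellE √(1 - tan a ^ 2) = ellipseQuarterPerimeter (cos a) (sin a) := fun a ha =>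
    cos_mul_ellE_sqrt_one_sub_tan_sq_s9 ⟨by linarith [ha.1, pi_pos], ha.2⟩
  have hbounds : ∀ a ∈ Ioc (0:ℝ) (π / 4), 1 ≤ cos a * ellE √(1 - tan a ^ 2) ∧
      cos a * ellE √(1 - tan a ^ 2) ≤ π / (2 * √2) := fun a ha => by
    rw [hΦ a ha]
    exact ⟨one_le_ellipseQuarterPerimeter (cos_sq_add_sin_sq a),
      ellipseQuarterPerimeter_le (cos_sq_add_sin_sq a)⟩
  refine ⟨hbounds, ?_, ?_⟩
  · rw [tan_pi_div_four, one_pow, sub_self, sqrt_zero, ellE_zero, cos_pi_div_four]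
    field_simp
    rw [sq_sqrt zero_le_two]
  · have hnear : Ioc (0:ℝ) (π / 4) ∈ 𝓝[>] 0 := Ioc_mem_nhdsGT (by positivity)
    have hcos_add_sin : Tendsto (fun a => cos a + sin a) (𝓝[>] 0) (𝓝 1) :=
      ((continuous_cos.add continuous_sin).tendsto' 0 1 (by simp)).mono_left nhdsWithin_le_nhds
    refine tendsto_of_tendsto_of_tendsto_of_le_of_le' tendsto_const_nhds hcos_add_sin ?_ ?_
    · filter_upwards [hnear] with a ha using (hbounds a ha).1
    · filter_upwards [hnear] with a ha
      have hcos : 0 ≤ cos a :=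
        cos_nonneg_of_mem_Icc ⟨by linarith [ha.1, pi_pos], by linarith [ha.2, pi_pos]⟩
      have hsin : 0 ≤ sin a := sin_nonneg_of_nonneg_of_le_pi ha.1.le (by linarith [ha.2, pi_pos])
      rw [hΦ a ha]
      exact ellipseQuarterPerimeter_le_add hcos hsin
end

section
/- With the substitutions cos φ = x, x² = u, u = (cos²a - sin²a)t + sin²a, t = y², for 0 < a < π/4 one has ∫_a^{π/2-a} sin φ / √(1 - sin²a·cos²a/(sin²φ·cos²φ)) dφ = cos(a)·E(√(1-tan²a)). -/
open Real Set

/-!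
The paper's chain of substitutions `cos φ = x`, `x² = u`, `u = (cos² a - sin² a) t + sin² a`,
`t = y²`, `y = sin θ` collapses to the single substitution `cos 2θ = -cos 2φ / cos 2a`, a
decreasing bijection of `(a, π/2 - a)` onto `(0, π/2)`. Along it
`sin φ = cos a · √(1 - k² sin² θ)` with `k² = 1 - tan² a`, and `|dθ/dφ| · sin φ` is exactly
the integrand on the left. Since the left integrand blows up at both endpoints, the change
of variables is done with the Jacobian formula on the open interval, which needs no
integrability hypothesis.
-/

open MeasureTheory

noncomputable def ellSubst (a φ : ℝ) : ℝ := arccos (-cos (2 * φ) / cos (2 * a)) / 2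

noncomputable def ellSubstDeriv (a φ : ℝ) : ℝ :=
  -sin (2 * φ) / √(cos (2 * a) ^ 2 - cos (2 * φ) ^ 2)

theorem cos_two_mul_sq_lt {a φ : ℝ} (ha : 0 < a) (hφ : φ ∈ Ioo a (π / 2 - a)) :
    cos (2 * φ) ^ 2 < cos (2 * a) ^ 2 := by
  obtain ⟨haφ, hφb⟩ := hφ
  have h₁ : cos (2 * φ) < cos (2 * a) :=
    strictAntiOn_cos ⟨by linarith, by linarith⟩ ⟨by linarith, by linarith⟩ (by linarith)
  have h₂ : cos (π - 2 * a) < cos (2 * φ) :=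
    strictAntiOn_cos ⟨by linarith, by linarith⟩ ⟨by linarith, by linarith⟩ (by linarith)
  rw [cos_pi_sub] at h₂
  exact sq_lt_sq' h₂ h₁

theorem hasDerivAt_ellSubst {a φ : ℝ} (hC : 0 < cos (2 * a))
    (hφ : cos (2 * φ) ^ 2 < cos (2 * a) ^ 2) :
    HasDerivAt (ellSubst a) (ellSubstDeriv a φ) φ := by
  have hx : |-cos (2 * φ) / cos (2 * a)| < 1 := by
    rw [abs_div, abs_neg, abs_of_pos hC, div_lt_one hC]
    exact abs_lt_of_sq_lt_sq hφ hC.le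
  have hinner : HasDerivAt (fun x => -cos (2 * x) / cos (2 * a))
      (2 * sin (2 * φ) / cos (2 * a)) φ :=
    ((((hasDerivAt_id φ).const_mul 2).cos.neg).div_const _).congr_deriv
      (by simp only [id, neg_mul, mul_one, neg_neg]; ring)
  refine (((hasDerivAt_arccos (abs_lt.1 hx).1.ne' (abs_lt.1 hx).2.ne).comp φ hinner).div_const
    2).congr_deriv ?_
  have hsq : √(cos (2 * a) ^ 2 - cos (2 * φ) ^ 2)
      = cos (2 * a) * √(1 - (-cos (2 * φ) / cos (2 * a)) ^ 2) := by
    rw [← sqrt_sq hC.le, ← sqrt_mul (sq_nonneg _), sqrt_sq hC.le]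
    congr 1
    field_simp
  rw [ellSubstDeriv, hsq]
  field_simp

theorem strictAntiOn_ellSubst {a : ℝ} (ha : 0 < a) (ha' : a < π / 4) :
    StrictAntiOn (ellSubst a) (Icc a (π / 2 - a)) := by
  have hC : 0 < cos (2 * a) := cos_pos_of_mem_Ioo ⟨by linarith, by linarith⟩
  have hmono : StrictMonoOn (fun φ => -cos (2 * φ) / cos (2 * a)) (Icc a (π / 2 - a)) :=
    fun x hx y hy hxy => div_lt_div_of_pos_right (neg_lt_neg (strictAntiOn_cos
      ⟨by linarith [hx.1], by linarith [hx.2]⟩ ⟨by linarith [hy.1], by linarith [hy.2]⟩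
      (by linarith))) hC
  have hmaps : MapsTo (fun φ => -cos (2 * φ) / cos (2 * a)) (Icc a (π / 2 - a))
      (Icc (-1) 1) := by
    intro φ hφ
    have h₁ : cos (2 * φ) ≤ cos (2 * a) :=
      cos_le_cos_of_nonneg_of_le_pi (by linarith) (by linarith [hφ.2]) (by linarith [hφ.1])
    have h₂ : cos (π - 2 * a) ≤ cos (2 * φ) :=
      cos_le_cos_of_nonneg_of_le_pi (by linarith [hφ.1]) (by linarith) (by linarith [hφ.2])
    rw [cos_pi_sub] at h₂
    constructor
    · rw [le_div_iff₀ hC]; linarith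
    · rw [div_le_one hC]; linarith
  exact fun x hx y hy hxy => div_lt_div_of_pos_right
    (strictAntiOn_arccos (hmaps hx) (hmaps hy) (hmono hx hy hxy)) two_pos

theorem image_ellSubst_Ioo {a : ℝ} (ha : 0 < a) (ha' : a < π / 4) :
    ellSubst a '' Ioo a (π / 2 - a) = Ioo 0 (π / 2) := by
  have hC : cos (2 * a) ≠ 0 := (cos_pos_of_mem_Ioo ⟨by linarith, by linarith⟩).ne'
  have hcont : Continuous (ellSubst a) := by unfold ellSubst; fun_prop
  rw [hcont.continuousOn.image_Ioo_of_strictAntiOn (by linarith) (strictAntiOn_ellSubst ha ha')]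
  congr 1
  · simp [ellSubst, show 2 * (π / 2 - a) = π - 2 * a by ring, cos_pi_sub, hC]
  · simp [ellSubst, hC]

theorem cos_mul_sqrt_one_sub_sin_sq_ellSubst {a φ : ℝ} (ha : 0 < cos a) (hC : 0 < cos (2 * a))
    (hφ : cos (2 * φ) ^ 2 ≤ cos (2 * a) ^ 2) (hsφ : 0 ≤ sin φ) :
    cos a * √(1 - √(1 - tan a ^ 2) ^ 2 * sin (ellSubst a φ) ^ 2) = sin φ := by
  have hx : |-cos (2 * φ) / cos (2 * a)| ≤ 1 := by
    rw [abs_div, abs_neg, abs_of_pos hC, div_le_one hC]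
    exact abs_le_of_sq_le_sq hφ hC.le
  have htan : tan a ^ 2 ≤ 1 := by
    rw [tan_eq_sin_div_cos, div_pow, div_le_one (by positivity)]
    nlinarith [cos_two_mul a, sin_sq_add_cos_sq a]
  have hsin : sin (ellSubst a φ) ^ 2 = (1 + cos (2 * φ) / cos (2 * a)) / 2 := by
    rw [ellSubst, sin_sq_eq_half_sub, mul_div_cancel₀ _ two_ne_zero,
      cos_arccos (abs_le.1 hx).1 (abs_le.1 hx).2]
    ring
  have hkey : 1 - (1 - tan a ^ 2) * ((1 + cos (2 * φ) / cos (2 * a)) / 2)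
      = (sin φ / cos a) ^ 2 := by
    have hk : 1 - tan a ^ 2 = cos (2 * a) / cos a ^ 2 := by
      rw [tan_eq_sin_div_cos, div_pow, cos_two_mul, sin_sq a]
      field_simp
      ring
    rw [hk, cos_two_mul φ, cos_sq' φ]
    field_simp
    rw [cos_two_mul]
    ring
  rw [hsin, sq_sqrt (by linarith), hkey, sqrt_sq (by positivity)]
  field_simp

theorem abs_ellSubstDeriv_mul_sin {a φ : ℝ} (hφ : 0 < sin (2 * φ)) :
    |ellSubstDeriv a φ| * sin φ
      = sin φ / √(1 - sin a ^ 2 * cos a ^ 2 / (sin φ ^ 2 * cos φ ^ 2)) := by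
  have hsc : sin φ * cos φ ≠ 0 := by nlinarith [sin_two_mul φ]
  have hs : sin φ ≠ 0 := left_ne_zero_of_mul hsc
  have hc : cos φ ≠ 0 := right_ne_zero_of_mul hsc
  have h : 1 - sin a ^ 2 * cos a ^ 2 / (sin φ ^ 2 * cos φ ^ 2)
      = (cos (2 * a) ^ 2 - cos (2 * φ) ^ 2) / sin (2 * φ) ^ 2 := by
    rw [cos_sq' (2 * a), cos_sq' (2 * φ), sin_two_mul, sin_two_mul]
    field_simp
    ring
  rw [h, sqrt_div' _ (sq_nonneg _), sqrt_sq hφ.le, ellSubstDeriv, abs_div, abs_neg,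
    abs_of_pos hφ, abs_of_nonneg (sqrt_nonneg _), div_div_eq_mul_div]
  ring

theorem setIntegral_Ioo_eq_setIntegral_comp_ellSubst {a : ℝ} (ha : 0 < a) (ha' : a < π / 4)
    (g : ℝ → ℝ) :
    ∫ θ in Ioo 0 (π / 2), g θ
      = ∫ φ in Ioo a (π / 2 - a), |ellSubstDeriv a φ| * g (ellSubst a φ) := by
  have hC : 0 < cos (2 * a) := cos_pos_of_mem_Ioo ⟨by linarith, by linarith⟩
  rw [← image_ellSubst_Ioo ha ha']
  exact integral_image_eq_integral_abs_deriv_smul measurableSet_Ioo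
    (fun φ hφ => (hasDerivAt_ellSubst hC (cos_two_mul_sq_lt ha hφ)).hasDerivWithinAt)
    ((strictAntiOn_ellSubst ha ha').injOn.mono Ioo_subset_Icc_self) g

theorem stmt12 : ∀ a : ℝ, 0 < a → a < Real.pi/4 →
    (∫ φ in a..(Real.pi/2 - a),
        Real.sin φ / Real.sqrt (1 - Real.sin a ^ 2 * Real.cos a ^ 2 /
          (Real.sin φ ^ 2 * Real.cos φ ^ 2))) =
      Real.cos a * ellE (Real.sqrt (1 - Real.tan a ^ 2)) := by
  intro a ha ha'
  have hC : 0 < cos (2 * a) := cos_pos_of_mem_Ioo ⟨by linarith, by linarith⟩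
  have hc : 0 < cos a := cos_pos_of_mem_Ioo ⟨by linarith, by linarith⟩
  rw [ellE, ← intervalIntegral.integral_const_mul, intervalIntegral.integral_of_le (by linarith),
    intervalIntegral.integral_of_le (by linarith), integral_Ioc_eq_integral_Ioo,
    integral_Ioc_eq_integral_Ioo, setIntegral_Ioo_eq_setIntegral_comp_ellSubst ha ha']
  refine setIntegral_congr_fun measurableSet_Ioo fun φ hφ => ?_
  have h2φ : 0 < sin (2 * φ) :=
    sin_pos_of_pos_of_lt_pi (by linarith [hφ.1]) (by linarith [hφ.2])
  rw [cos_mul_sqrt_one_sub_sin_sq_ellSubst hc hC (cos_two_mul_sq_lt ha hφ).le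
    (sin_nonneg_of_nonneg_of_le_pi (by linarith [hφ.1]) (by linarith [hφ.2])),
    abs_ellSubstDeriv_mul_sin h2φ]
end
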